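/- Let A : ℝⁿ → ℝ^{n×n}, b : ℝⁿ → ℝⁿ, and c : ℝⁿ → ℝ be bounded measurable with |A(x)| ≤ Λ, |b(x)| ≤ M, |c(x)| ≤ M for a.e. x, and for functions v, w define L(v, w) := ∫_{ℝⁿ} ( A∇v · ∇w + (b · ∇v) w + c v w ) dx whenever the integrand is integrable. Let G ⊆ ℝⁿ be open, let d > 0 and K > 0, let ω : ℝⁿ → ℝ be C^∞ with compact support contained in G, with 0 ≤ ω ≤ 1 and sup |∇ω| ≤ K/d, and let u : ℝⁿ → ℝ be C¹. Then there is a constant C = C(Λ, M, K) such that for every ε > 0, L(ωu, ωu) ≤ |L(u, ω²u)| + (C/(ε d²)) ‖u‖²_{L²(G)} + ε ‖ωu‖²_{H¹(ℝⁿ)}. (Estimate (3.5).) -/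

import Mathlib

open MeasureTheory Metric
open scoped ENNReal

/-- The `L²(S)` norm of a scalar function on `ℝⁿ`. -/
noncomputable def L2norm {n : ℕ} (S : Set (EuclideanSpace ℝ (Fin n)))
    (f : EuclideanSpace ℝ (Fin n) → ℝ) : ℝ :=
  (∫ x in S, f x ^ 2) ^ (1 / 2 : ℝ)

/-- The `L²(S)` norm of the (a.e. defined, extended by junk value `0`) gradient of a scalar
function on `ℝⁿ`; for Lipschitz functions this agrees a.e. with the Rademacher gradient. -/
noncomputable def gradL2norm {n : ℕ} (S : Set (EuclideanSpace ℝ (Fin n)))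
    (f : EuclideanSpace ℝ (Fin n) → ℝ) : ℝ :=
  (∫ x in S, ‖gradient f x‖ ^ 2) ^ (1 / 2 : ℝ)

/-- The `H¹(S)` norm. -/
noncomputable def H1norm {n : ℕ} (S : Set (EuclideanSpace ℝ (Fin n)))
    (f : EuclideanSpace ℝ (Fin n) → ℝ) : ℝ :=
  (L2norm S f ^ 2 + gradL2norm S f ^ 2) ^ (1 / 2 : ℝ)

/-- The bilinear form `L(v, w) = ∫_S ( A ∇v · ∇w + (b · ∇v) w + c v w ) dx`. -/
noncomputable def Lform {n : ℕ} (S : Set (EuclideanSpace ℝ (Fin n)))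
    (A : EuclideanSpace ℝ (Fin n) → Matrix (Fin n) (Fin n) ℝ)
    (b : EuclideanSpace ℝ (Fin n) → EuclideanSpace ℝ (Fin n))
    (c : EuclideanSpace ℝ (Fin n) → ℝ)
    (v w : EuclideanSpace ℝ (Fin n) → ℝ) : ℝ :=
  ∫ x in S, ((inner ℝ (Matrix.toEuclideanLin (A x) (gradient v x)) (gradient w x) : ℝ)
    + (inner ℝ (b x) (gradient v x) : ℝ) * w x + c x * v x * w x)

/-- The `L²(S)` norm, valued in `ℝ≥0∞` (so that non-square-integrable functions give `∞`). -/
noncomputable def eL2 {n : ℕ} (S : Set (EuclideanSpace ℝ (Fin n)))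
    (f : EuclideanSpace ℝ (Fin n) → ℝ) : ℝ≥0∞ :=
  eLpNorm f 2 (volume.restrict S)

/-- The `L²(S)` norm of the gradient, valued in `ℝ≥0∞`. -/
noncomputable def eGradL2 {n : ℕ} (S : Set (EuclideanSpace ℝ (Fin n)))
    (f : EuclideanSpace ℝ (Fin n) → ℝ) : ℝ≥0∞ :=
  eLpNorm (fun x => ‖gradient f x‖) 2 (volume.restrict S)

/-- The square of the `H¹(S)` norm, valued in `ℝ≥0∞`. -/
noncomputable def eH1sq {n : ℕ} (S : Set (EuclideanSpace ℝ (Fin n)))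
    (f : EuclideanSpace ℝ (Fin n) → ℝ) : ℝ≥0∞ :=
  eL2 S f ^ 2 + eGradL2 S f ^ 2

/-!
Since `∇(ωu) = ω ∇u + u ∇ω` and `∇(ω²u) = ω ∇(ωu) + ωu ∇ω`, the integrands of `L(ωu, ωu)` and
`L(u, ω²u)` differ by terms that each carry a factor `∇ω`; they are bounded by `|∇ω| ≤ K/d` and
vanish outside `G`. Young's inequality absorbs the accompanying factors `∇(ωu)` and `ωu` into
`ε ‖ωu‖²_{H¹}` at the price of `O(1/ε) (K/d)² u²`. The leftover term `Λ |∇ω|² u²` is `O(1/ε)` only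
for bounded `ε`; for `ε ≥ Λ + 2M` the crude bound `L(ωu, ωu) ≤ (Λ + 2M) ‖ωu‖²_{H¹}` suffices.
-/

open Matrix Set
open scoped Gradient RealInnerProductSpace

lemma mul_le_sq_div_add_mul_sq {ε : ℝ} (hε : 0 < ε) (x y : ℝ) :
    x * y ≤ x ^ 2 / (4 * ε) + ε * y ^ 2 := by
  have key : x ^ 2 / (4 * ε) + ε * y ^ 2 - x * y = (x - 2 * ε * y) ^ 2 / (4 * ε) := by
    field_simp
    ring
  have : 0 ≤ (x - 2 * ε * y) ^ 2 / (4 * ε) := by positivity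
  linarith

section Integration

variable {α : Type*} [MeasurableSpace α] {μ : Measure α}

lemma ofReal_integral_le_lintegral_ofReal (f : α → ℝ) :
    ENNReal.ofReal (∫ x, f x ∂μ) ≤ ∫⁻ x, ENNReal.ofReal (f x) ∂μ := by
  by_cases hf : Integrable f μ
  · rw [integral_eq_lintegral_pos_part_sub_lintegral_neg_part hf]
    exact (ENNReal.ofReal_le_ofReal (sub_le_self _ ENNReal.toReal_nonneg)).trans
      ENNReal.ofReal_toReal_le
  · simp [integral_undef hf]

lemma ofReal_integral_le_abs_integral_add_lintegral {P Q D : α → ℝ} (hD : Integrable D μ)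
    (hPQD : ∀ x, P x = Q x + D x) :
    ENNReal.ofReal (∫ x, P x ∂μ) ≤
      ENNReal.ofReal |∫ x, Q x ∂μ| + ∫⁻ x, ENNReal.ofReal (D x) ∂μ := by
  by_cases hP : Integrable P μ
  · have hQ : Integrable Q μ := (hP.sub hD).congr (ae_of_all _ fun x => by simp [hPQD x])
    rw [show ∫ x, P x ∂μ = ∫ x, Q x ∂μ + ∫ x, D x ∂μ by simp_rw [hPQD]; exact integral_add hQ hD]
    exact ENNReal.ofReal_add_le.trans (add_le_add (ENNReal.ofReal_le_ofReal (le_abs_self _))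
      (ofReal_integral_le_lintegral_ofReal D))
  · simp [integral_undef hP]

lemma eLpNorm_two_sq_eq_lintegral (f : α → ℝ) :
    eLpNorm f 2 μ ^ 2 = ∫⁻ x, ENNReal.ofReal (f x ^ 2) ∂μ := by
  have h := eLpNorm_nnreal_pow_eq_lintegral (μ := μ) (f := f) (p := 2) two_ne_zero
  simp only [NNReal.coe_ofNat, ENNReal.rpow_ofNat, ENNReal.coe_ofNat] at h
  rw [h]
  congr 1 with x
  rw [Real.enorm_eq_ofReal_abs, ← ENNReal.ofReal_pow (abs_nonneg _), sq_abs]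

end Integration

section Gradient

variable {E : Type*} [NormedAddCommGroup E] [InnerProductSpace ℝ E] [CompleteSpace E]

lemma gradient_fun_mul {f g : E → ℝ} {x : E} (hf : DifferentiableAt ℝ f x)
    (hg : DifferentiableAt ℝ g x) :
    ∇ (fun y => f y * g y) x = f x • ∇ g x + g x • ∇ f x := by
  simp only [gradient, fderiv_fun_mul hf hg, map_add, map_smul]

lemma gradient_of_notMem_tsupport {f : E → ℝ} {x : E} (hx : x ∉ tsupport f) : ∇ f x = 0 := by
  simp [gradient, fderiv_of_notMem_tsupport ℝ hx]

lemma ContDiff.continuous_gradient {f : E → ℝ} (hf : ContDiff ℝ 1 f) : Continuous (∇ f) :=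
  (InnerProductSpace.toDual ℝ E).symm.continuous.comp (hf.continuous_fderiv one_ne_zero)

end Gradient

section BilinearForm

variable {E : Type*} [NormedAddCommGroup E] [InnerProductSpace ℝ E] [CompleteSpace E]
  (A : E → E →ₗ[ℝ] E) (b : E → E) (c : E → ℝ)

noncomputable def formDensity (v w : E → ℝ) (x : E) : ℝ :=
  ⟪A x (∇ v x), ∇ w x⟫ + ⟪b x, ∇ v x⟫ * w x + c x * v x * w x

noncomputable def cutoffDefect (ω u : E → ℝ) (x : E) : ℝ :=
  u x * ⟪A x (∇ ω x), ∇ (fun y => ω y * u y) x⟫ - u x * ⟪A x (∇ (fun y => ω y * u y) x), ∇ ω x⟫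
    + u x ^ 2 * ⟪A x (∇ ω x), ∇ ω x⟫ + ω x * u x ^ 2 * ⟪b x, ∇ ω x⟫

variable {A b c}

lemma formDensity_mul_eq_add_cutoffDefect {ω u : E → ℝ} {x : E}
    (hω : DifferentiableAt ℝ ω x) (hu : DifferentiableAt ℝ u x) :
    formDensity A b c (fun y => ω y * u y) (fun y => ω y * u y) x =
      formDensity A b c u (fun y => ω y ^ 2 * u y) x + cutoffDefect A b ω u x := by
  have hωu : ∇ (fun y => ω y * u y) x = ω x • ∇ u x + u x • ∇ ω x := gradient_fun_mul hω hu
  have hω2u : ∇ (fun y => ω y ^ 2 * u y) x =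
      ω x • ∇ (fun y => ω y * u y) x + (ω x * u x) • ∇ ω x := by
    rw [show (fun y => ω y ^ 2 * u y) = fun y => ω y * (ω y * u y) by ext; ring]
    exact gradient_fun_mul hω (hω.mul hu)
  simp only [formDensity, cutoffDefect, hω2u, hωu, map_add, map_smul, inner_add_left,
    inner_add_right, real_inner_smul_left, real_inner_smul_right]
  ring

variable {Λ M : ℝ} {ω u : E → ℝ} {x : E}

lemma abs_cutoffDefect_le {ε : ℝ} (hε : 0 < ε) (hA : ∀ ξ, ‖A x ξ‖ ≤ Λ * ‖ξ‖) (hb : ‖b x‖ ≤ M) :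
    |cutoffDefect A b ω u x| ≤ (Λ + (Λ ^ 2 + M ^ 2 / 4) / ε) * ‖∇ ω x‖ ^ 2 * u x ^ 2
      + ε * ((ω x * u x) ^ 2 + ‖∇ (fun y => ω y * u y) x‖ ^ 2) := by
  set gω := ‖∇ ω x‖
  set gf := ‖∇ (fun y => ω y * u y) x‖
  have hAinner : ∀ ξ η : E, |⟪A x ξ, η⟫| ≤ Λ * ‖ξ‖ * ‖η‖ := fun ξ η =>
    (abs_real_inner_le_norm _ _).trans (mul_le_mul_of_nonneg_right (hA ξ) (norm_nonneg η))
  have hbinner : |⟪b x, ∇ ω x⟫| ≤ M * gω :=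
    (abs_real_inner_le_norm _ _).trans (mul_le_mul_of_nonneg_right hb (norm_nonneg _))
  have hterms : |cutoffDefect A b ω u x| ≤
      (2 * Λ * gω * |u x|) * gf + Λ * gω ^ 2 * u x ^ 2 + (M * gω * |u x|) * |ω x * u x| := by
    have t1 : |u x * ⟪A x (∇ ω x), ∇ (fun y => ω y * u y) x⟫| ≤ Λ * gω * |u x| * gf := by
      rw [abs_mul]
      exact (mul_le_mul_of_nonneg_left (hAinner _ _) (abs_nonneg _)).trans_eq (by ring)
    have t2 : |u x * ⟪A x (∇ (fun y => ω y * u y) x), ∇ ω x⟫| ≤ Λ * gω * |u x| * gf := by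
      rw [abs_mul]
      exact (mul_le_mul_of_nonneg_left (hAinner _ _) (abs_nonneg _)).trans_eq (by ring)
    have t3 : |u x ^ 2 * ⟪A x (∇ ω x), ∇ ω x⟫| ≤ Λ * gω ^ 2 * u x ^ 2 := by
      rw [abs_mul, abs_pow, sq_abs]
      exact (mul_le_mul_of_nonneg_left (hAinner _ _) (sq_nonneg _)).trans_eq (by ring)
    have t4 : |ω x * u x ^ 2 * ⟪b x, ∇ ω x⟫| ≤ M * gω * |u x| * |ω x * u x| := by
      rw [show ω x * u x ^ 2 = (ω x * u x) * u x by ring, abs_mul, abs_mul]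
      exact (mul_le_mul_of_nonneg_left hbinner (by positivity)).trans_eq (by ring)
    unfold cutoffDefect
    linarith [abs_add_three (u x * ⟪A x (∇ ω x), ∇ (fun y => ω y * u y) x⟫
      - u x * ⟪A x (∇ (fun y => ω y * u y) x), ∇ ω x⟫) (u x ^ 2 * ⟪A x (∇ ω x), ∇ ω x⟫)
      (ω x * u x ^ 2 * ⟪b x, ∇ ω x⟫), abs_sub (u x * ⟪A x (∇ ω x), ∇ (fun y => ω y * u y) x⟫)
      (u x * ⟪A x (∇ (fun y => ω y * u y) x), ∇ ω x⟫)]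
  have hy1 := mul_le_sq_div_add_mul_sq hε (2 * Λ * gω * |u x|) gf
  have hy2 := mul_le_sq_div_add_mul_sq hε (M * gω * |u x|) |ω x * u x|
  have hcoeff : (Λ + (Λ ^ 2 + M ^ 2 / 4) / ε) * gω ^ 2 * u x ^ 2 =
      Λ * gω ^ 2 * u x ^ 2 + (2 * Λ * gω * |u x|) ^ 2 / (4 * ε)
        + (M * gω * |u x|) ^ 2 / (4 * ε) := by
    field_simp
    rw [← sq_abs (u x)]
    ring
  rw [hcoeff, ← sq_abs (ω x * u x)]
  linarith

lemma formDensity_self_le (hΛ : 0 ≤ Λ) (hM : 0 ≤ M) {f : E → ℝ}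
    (hA : ∀ ξ, ‖A x ξ‖ ≤ Λ * ‖ξ‖) (hb : ‖b x‖ ≤ M) (hc : |c x| ≤ M) :
    formDensity A b c f f x ≤ (Λ + 2 * M) * (f x ^ 2 + ‖∇ f x‖ ^ 2) := by
  have t1 : ⟪A x (∇ f x), ∇ f x⟫ ≤ Λ * ‖∇ f x‖ ^ 2 :=
    (real_inner_le_norm _ _).trans
      ((mul_le_mul_of_nonneg_right (hA _) (norm_nonneg _)).trans_eq (by ring))
  have t2 : ⟪b x, ∇ f x⟫ * f x ≤ M * ‖∇ f x‖ * |f x| := by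
    refine (le_abs_self _).trans ?_
    rw [abs_mul]
    exact mul_le_mul_of_nonneg_right ((abs_real_inner_le_norm _ _).trans
      (mul_le_mul_of_nonneg_right hb (norm_nonneg _))) (abs_nonneg _)
  have t3 : c x * f x * f x ≤ M * f x ^ 2 := by
    rw [mul_assoc, ← sq]
    exact (le_abs_self _).trans (by rw [abs_mul, abs_pow, sq_abs]; gcongr)
  have amgm : 2 * (‖∇ f x‖ * |f x|) ≤ ‖∇ f x‖ ^ 2 + f x ^ 2 := by
    have := two_mul_le_add_sq ‖∇ f x‖ |f x|
    rwa [sq_abs, mul_assoc] at this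
  unfold formDensity
  nlinarith [mul_le_mul_of_nonneg_left amgm hM, mul_nonneg hΛ (sq_nonneg (f x)),
    mul_nonneg hM (sq_nonneg ‖∇ f x‖)]

lemma cutoffDefect_le_indicator_add {G : Set E} {ε k a : ℝ} (hΛ : 0 ≤ Λ) (hε : 0 < ε)
    (hA : ∀ ξ, ‖A x ξ‖ ≤ Λ * ‖ξ‖) (hb : ‖b x‖ ≤ M) (hωG : tsupport ω ⊆ G)
    (hωk : ‖∇ ω x‖ ≤ k) (ha : (Λ + (Λ ^ 2 + M ^ 2 / 4) / ε) * k ^ 2 ≤ a) :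
    cutoffDefect A b ω u x ≤ G.indicator (fun y => a * u y ^ 2) x
      + ε * ((ω x * u x) ^ 2 + ‖∇ (fun y => ω y * u y) x‖ ^ 2) := by
  refine (le_abs_self _).trans ((abs_cutoffDefect_le hε hA hb).trans (add_le_add_left ?_ _))
  by_cases hx : x ∈ G
  · rw [indicator_of_mem hx]
    gcongr
    exact (mul_le_mul_of_nonneg_left (pow_le_pow_left₀ (norm_nonneg _) hωk 2)
      (by positivity)).trans ha
  · rw [indicator_of_notMem hx, gradient_of_notMem_tsupport fun h => hx (hωG h)]
    simp

end BilinearForm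

section Integrability

variable {E : Type*} [NormedAddCommGroup E] [InnerProductSpace ℝ E] [CompleteSpace E]
  [MeasurableSpace E] [BorelSpace E] {μ : Measure E} [IsFiniteMeasureOnCompacts μ]
  {A : E → E →ₗ[ℝ] E} {b : E → E} {Λ M : ℝ} {ω u : E → ℝ}

lemma integrable_cutoffDefect (hmeas : AEStronglyMeasurable (cutoffDefect A b ω u) μ)
    (hA : ∀ᵐ x ∂μ, ∀ ξ, ‖A x ξ‖ ≤ Λ * ‖ξ‖) (hb : ∀ᵐ x ∂μ, ‖b x‖ ≤ M)
    (hω : ContDiff ℝ 1 ω) (hωc : HasCompactSupport ω) (hu : ContDiff ℝ 1 u) :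
    Integrable (cutoffDefect A b ω u) μ := by
  set B : E → ℝ := fun x => (Λ + (Λ ^ 2 + M ^ 2 / 4)) * ‖∇ ω x‖ ^ 2 * u x ^ 2
    + ((ω x * u x) ^ 2 + ‖∇ (fun y => ω y * u y) x‖ ^ 2)
  have hBc : Continuous B := by
    have := hω.continuous_gradient
    have := (hω.mul hu).continuous_gradient
    have := hω.continuous
    have := hu.continuous
    fun_prop
  have hBs : HasCompactSupport B := by
    refine hωc.mono' fun x hx => by_contra fun hxω => hx ?_
    have hωu : x ∉ tsupport fun y => ω y * u y := fun h => hxω (tsupport_mul_subset_left h)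
    simp [B, gradient_of_notMem_tsupport hxω, gradient_of_notMem_tsupport hωu,
      image_eq_zero_of_notMem_tsupport hxω]
  refine (hBc.integrable_of_hasCompactSupport hBs).mono' hmeas ?_
  filter_upwards [hA, hb] with x hAx hbx
  simpa [B] using abs_cutoffDefect_le one_pos hAx hbx

end Integrability

section EuclideanSpace

variable {n : ℕ}

local notation "ℝⁿ" => EuclideanSpace ℝ (Fin n)

lemma Measurable.toEuclideanLin_apply {α : Type*} [MeasurableSpace α]
    {A : α → Matrix (Fin n) (Fin n) ℝ} (hA : Measurable fun x => fun i j => A x i j)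
    {v : α → ℝⁿ} (hv : Measurable v) :
    Measurable fun x => toEuclideanLin (A x) (v x) := by
  have hcont : Continuous fun p : (Fin n → Fin n → ℝ) × ℝⁿ =>
      WithLp.toLp 2 ((p.1 : Matrix (Fin n) (Fin n) ℝ) *ᵥ WithLp.ofLp p.2) := by
    fun_prop
  exact Continuous.measurable2
    (c := fun (B : Fin n → Fin n → ℝ) v => toEuclideanLin (B : Matrix (Fin n) (Fin n) ℝ) v)
    hcont hA hv

lemma measurable_cutoffDefect {A : ℝⁿ → Matrix (Fin n) (Fin n) ℝ}
    {b : ℝⁿ → ℝⁿ} {ω u : ℝⁿ → ℝ}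
    (hA : Measurable fun x => fun i j => A x i j) (hb : Measurable b)
    (hω : ContDiff ℝ 1 ω) (hu : ContDiff ℝ 1 u) :
    Measurable (cutoffDefect (fun x => toEuclideanLin (A x)) b ω u) := by
  have hgω := hω.continuous_gradient.measurable
  have hgf := (hω.mul hu).continuous_gradient.measurable
  have := hω.continuous.measurable
  have := hu.continuous.measurable
  have := hA.toEuclideanLin_apply hgω
  have := hA.toEuclideanLin_apply hgf
  unfold cutoffDefect
  fun_prop

lemma Lform_univ_eq_integral (A : ℝⁿ → Matrix (Fin n) (Fin n) ℝ)
    (b : ℝⁿ → ℝⁿ) (c : ℝⁿ → ℝ)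
    (v w : ℝⁿ → ℝ) :
    Lform univ A b c v w = ∫ x, formDensity (fun x => toEuclideanLin (A x)) b c v w x := by
  rw [Lform, Measure.restrict_univ]
  rfl

lemma lintegral_ofReal_indicator_mul_sq {G : Set (ℝⁿ)}
    (hG : MeasurableSet G) {a : ℝ} (ha : 0 ≤ a) (u : ℝⁿ → ℝ) :
    ∫⁻ x, ENNReal.ofReal (G.indicator (fun y => a * u y ^ 2) x) =
      ENNReal.ofReal a * eL2 G u ^ 2 := by
  have hind : ∀ x, ENNReal.ofReal (G.indicator (fun y => a * u y ^ 2) x) =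
      G.indicator (fun y => ENNReal.ofReal (a * u y ^ 2)) x := fun x =>
    congr_fun (indicator_comp_of_zero ENNReal.ofReal_zero).symm x
  simp_rw [hind, ENNReal.ofReal_mul ha]
  rw [lintegral_indicator hG, eL2, eLpNorm_two_sq_eq_lintegral, ← lintegral_const_mul' _ _
    ENNReal.ofReal_ne_top]

lemma lintegral_ofReal_mul_eH1sq {ε : ℝ} (hε : 0 ≤ ε) {f : ℝⁿ → ℝ}
    (hf : Measurable f) :
    ∫⁻ x, ENNReal.ofReal (ε * (f x ^ 2 + ‖∇ f x‖ ^ 2)) = ENNReal.ofReal ε * eH1sq univ f := by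
  simp_rw [ENNReal.ofReal_mul hε, ENNReal.ofReal_add (sq_nonneg _) (sq_nonneg _)]
  rw [lintegral_const_mul' _ _ ENNReal.ofReal_ne_top,
    lintegral_add_left (hf.pow_const 2).ennreal_ofReal, eH1sq, eL2, eGradL2,
    eLpNorm_two_sq_eq_lintegral, eLpNorm_two_sq_eq_lintegral, Measure.restrict_univ]

lemma lintegral_ofReal_cutoffDefect_le {A : ℝⁿ → ℝⁿ →ₗ[ℝ] ℝⁿ} {b : ℝⁿ → ℝⁿ} {G : Set ℝⁿ}
    {ω u : ℝⁿ → ℝ} {Λ M ε k a : ℝ} (hΛ : 0 ≤ Λ) (hε : 0 < ε)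
    (hA : ∀ᵐ x, ∀ ξ, ‖A x ξ‖ ≤ Λ * ‖ξ‖) (hb : ∀ᵐ x, ‖b x‖ ≤ M)
    (hG : MeasurableSet G) (hωG : tsupport ω ⊆ G) (hωk : ∀ x, ‖∇ ω x‖ ≤ k)
    (ha : (Λ + (Λ ^ 2 + M ^ 2 / 4) / ε) * k ^ 2 ≤ a)
    (hu : Measurable u) (hωu : Measurable fun x => ω x * u x) :
    ∫⁻ x, ENNReal.ofReal (cutoffDefect A b ω u x) ≤
      ENNReal.ofReal a * eL2 G u ^ 2 + ENNReal.ofReal ε * eH1sq univ fun x => ω x * u x := by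
  have ha0 : 0 ≤ a :=
    (mul_nonneg (by positivity : 0 ≤ Λ + (Λ ^ 2 + M ^ 2 / 4) / ε) (sq_nonneg k)).trans ha
  rw [← lintegral_ofReal_indicator_mul_sq hG ha0, ← lintegral_ofReal_mul_eH1sq hε.le hωu,
    ← lintegral_add_left (((hu.pow_const 2).const_mul a).indicator hG).ennreal_ofReal]
  refine lintegral_mono_ae ?_
  filter_upwards [hA, hb] with x hAx hbx
  exact (ENNReal.ofReal_le_ofReal (cutoffDefect_le_indicator_add (A := A) (u := u) hΛ hε hAx hbx
    hωG (hωk x) ha)).trans ENNReal.ofReal_add_le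

lemma ofReal_integral_formDensity_self_le {A : ℝⁿ → ℝⁿ →ₗ[ℝ] ℝⁿ} {b : ℝⁿ → ℝⁿ} {c : ℝⁿ → ℝ}
    {f : ℝⁿ → ℝ} {Λ M ε : ℝ} (hΛ : 0 ≤ Λ) (hM : 0 ≤ M)
    (hA : ∀ᵐ x, ∀ ξ, ‖A x ξ‖ ≤ Λ * ‖ξ‖) (hb : ∀ᵐ x, ‖b x‖ ≤ M) (hc : ∀ᵐ x, |c x| ≤ M)
    (hε : Λ + 2 * M ≤ ε) (hf : Measurable f) :
    ENNReal.ofReal (∫ x, formDensity A b c f f x) ≤ ENNReal.ofReal ε * eH1sq univ f := by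
  refine (ofReal_integral_le_lintegral_ofReal _).trans ?_
  rw [← lintegral_ofReal_mul_eH1sq (by linarith) hf]
  refine lintegral_mono_ae ?_
  filter_upwards [hA, hb, hc] with x hAx hbx hcx
  exact ENNReal.ofReal_le_ofReal ((formDensity_self_le (A := A) hΛ hM hAx hbx hcx).trans
    (by gcongr))

end EuclideanSpace

lemma cutoffDefect_coeff_le {Λ M K ε d : ℝ} (hΛ : 0 ≤ Λ) (hM : 0 ≤ M) (hε : 0 < ε)
    (hεΛM : ε ≤ Λ + 2 * M) (hd : d ≠ 0) :
    (Λ + (Λ ^ 2 + M ^ 2 / 4) / ε) * (K / d) ^ 2 ≤ 2 * ((Λ + M + 1) * K) ^ 2 / (ε * d ^ 2) := by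
  have hnum : Λ * ε + Λ ^ 2 + M ^ 2 / 4 ≤ 2 * (Λ + M + 1) ^ 2 := by
    nlinarith [mul_le_mul_of_nonneg_left hεΛM hΛ]
  rw [show (Λ + (Λ ^ 2 + M ^ 2 / 4) / ε) * (K / d) ^ 2 =
      (Λ * ε + Λ ^ 2 + M ^ 2 / 4) * K ^ 2 / (ε * d ^ 2) by field_simp; ring,
    mul_pow, ← mul_assoc]
  gcongr

/-- **Estimate (3.5):** there is `C = C(Λ, M, K)` such that for every `ε > 0`,
`L(ωu, ωu) ≤ |L(u, ω²u)| + (C/(ε d²)) ‖u‖²_{L²(G)} + ε ‖ωu‖²_{H¹(ℝⁿ)}`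
(the `L²`/`H¹` quantities on the right are taken in `ℝ≥0∞`, so the estimate is trivially
true when they are infinite). -/
theorem estimate_3_5
    (Λ M K : ℝ) (hΛ : 0 ≤ Λ) (hM : 0 ≤ M) (hK : 0 < K) :
    ∃ C : ℝ, 0 < C ∧
      ∀ (n : ℕ)
        (A : EuclideanSpace ℝ (Fin n) → Matrix (Fin n) (Fin n) ℝ)
        (b : EuclideanSpace ℝ (Fin n) → EuclideanSpace ℝ (Fin n))
        (c : EuclideanSpace ℝ (Fin n) → ℝ),
        (Measurable fun x => fun i j => A x i j) → Measurable b → Measurable c →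
        (∀ᵐ x ∂(volume : Measure (EuclideanSpace ℝ (Fin n))),
          ∀ ξ, ‖Matrix.toEuclideanLin (A x) ξ‖ ≤ Λ * ‖ξ‖) →
        (∀ᵐ x ∂(volume : Measure (EuclideanSpace ℝ (Fin n))), ‖b x‖ ≤ M) →
        (∀ᵐ x ∂(volume : Measure (EuclideanSpace ℝ (Fin n))), |c x| ≤ M) →
        ∀ G : Set (EuclideanSpace ℝ (Fin n)), IsOpen G →
        ∀ d : ℝ, 0 < d →
        ∀ ω : EuclideanSpace ℝ (Fin n) → ℝ, ContDiff ℝ (⊤ : ℕ∞) ω →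
          HasCompactSupport ω → tsupport ω ⊆ G →
          (∀ x, 0 ≤ ω x) → (∀ x, ω x ≤ 1) → (∀ x, ‖gradient ω x‖ ≤ K / d) →
        ∀ u : EuclideanSpace ℝ (Fin n) → ℝ, ContDiff ℝ 1 u →
        ∀ ε : ℝ, 0 < ε →
          ENNReal.ofReal
              (Lform Set.univ A b c (fun x => ω x * u x) (fun x => ω x * u x)) ≤
            ENNReal.ofReal |Lform Set.univ A b c u (fun x => ω x ^ 2 * u x)| +
              ENNReal.ofReal (C / (ε * d ^ 2)) * eL2 G u ^ 2 +
              ENNReal.ofReal ε * eH1sq Set.univ (fun x => ω x * u x) := by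
  have hΛM : 0 < Λ + M + 1 := by linarith
  refine ⟨2 * ((Λ + M + 1) * K) ^ 2, by positivity, ?_⟩
  intro n A b c hAm hbm _ hA hb hc G hG d hd ω hω hωc hωG _ _ hωK u hu ε hε
  have hω₁ : ContDiff ℝ 1 ω := hω.of_le (by exact_mod_cast le_top)
  have hωu : Measurable fun x => ω x * u x := (hω₁.continuous.mul hu.continuous).measurable
  rw [Lform_univ_eq_integral, Lform_univ_eq_integral]
  rcases lt_or_ge ε (Λ + 2 * M) with hsmall | hlarge
  · have hdefect := integrable_cutoffDefect
      (measurable_cutoffDefect hAm hbm hω₁ hu).aestronglyMeasurable hA hb hω₁ hωc hu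
    refine (ofReal_integral_le_abs_integral_add_lintegral hdefect fun x =>
      formDensity_mul_eq_add_cutoffDefect (hω₁.differentiable one_ne_zero x)
        (hu.differentiable one_ne_zero x)).trans ?_
    rw [add_assoc]
    exact add_le_add le_rfl (lintegral_ofReal_cutoffDefect_le hΛ hε hA hb hG.measurableSet hωG
      hωK (cutoffDefect_coeff_le hΛ hM hε hsmall.le hd.ne') hu.continuous.measurable hωu)
  · exact (ofReal_integral_formDensity_self_le hΛ hM hA hb hc hlarge hωu).trans le_add_self
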